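/- arXiv:math/0606563 — 2 statements merged into one kernel-verified Lean document; each statement's English description precedes it below -/
import Mathlib

section
/- With R, G, π, φ as above and tr: R[G] → R[π_{φ'}] the trace map sending Σ r_g·g to Σ_{g∈π} r_g·[g]: for all a, b ∈ R[G], tr(a·b) = tr(φ(b)·a), where φ is extended R-linearly to R[G]. -/
open scoped Classical

/-- Twisted conjugacy relation on `π`: `a ∼ b` iff `b = φ(γ) a γ⁻¹` for some `γ ∈ G`. -/
def twRel {G : Type} [Group G] (π : Subgroup G) (φ : G →* G) (a b : ↥π) : Prop :=
  ∃ γ : G, (b : G) = φ γ * ↑a * γ⁻¹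

/-- The set of twisted conjugacy classes `π_{φ'}`. -/
def TwCl {G : Type} [Group G] (π : Subgroup G) (φ : G →* G) := Quot (twRel π φ)

/-- The twisted trace `tr : R[G] → R[π_{φ'}]`, sending `Σ r_g·g` to `Σ_{g ∈ π} r_g·[g]`. -/
noncomputable def twTr (R : Type) {G : Type} [CommRing R] [Group G] (π : Subgroup G)
    (φ : G →* G) (a : MonoidAlgebra R G) : TwCl π φ →₀ R :=
  Finsupp.sum a.coeff fun g r =>
    if h : g ∈ π then Finsupp.single (Quot.mk (twRel π φ) ⟨g, h⟩) r else 0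

/-!
Both sides are biadditive in `(a, b)`, so it suffices to take `a = r·g` and `b = s·h`. Then
`g h` and `φ(h) g = φ(h) (g h) h⁻¹` are twisted conjugate by `h`, and one lies in `π` iff the
other does, because `π` is normal and `φ(h) h⁻¹ ∈ π`.
-/

section Twisted

variable {G : Type} [Group G] (π : Subgroup G) (φ : G →* G)

theorem mul_mem_iff_map_mul_mem [π.Normal] (hquot : ∀ g : G, φ g * g⁻¹ ∈ π) (g h : G) :
    g * h ∈ π ↔ φ h * g ∈ π := by
  rw [Subgroup.Normal.mem_comm_iff inferInstance,
    ← π.mul_mem_cancel_left (hquot h), mul_assoc, inv_mul_cancel_left]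

theorem twRel_mul_map_mul (g h : G) (hgh : g * h ∈ π) (hhg : φ h * g ∈ π) :
    twRel π φ ⟨g * h, hgh⟩ ⟨φ h * g, hhg⟩ :=
  ⟨h, by simp [mul_assoc]⟩

variable (R : Type) [CommRing R]

@[simp]
theorem twTr_zero : twTr R π φ 0 = 0 := by
  simp [twTr]

theorem twTr_add (a b : MonoidAlgebra R G) :
    twTr R π φ (a + b) = twTr R π φ a + twTr R π φ b := by
  unfold twTr
  rw [MonoidAlgebra.coeff_add]
  refine Finsupp.sum_add_index' (fun g => ?_) fun g r s => ?_
  · split_ifs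
    exacts [Finsupp.single_zero _, rfl]
  · split_ifs
    exacts [Finsupp.single_add _ r s, (add_zero 0).symm]

theorem twTr_single (g : G) (r : R) :
    twTr R π φ (MonoidAlgebra.single g r) =
      if h : g ∈ π then Finsupp.single (α := TwCl π φ) (Quot.mk _ ⟨g, h⟩) r else 0 := by
  unfold twTr
  rw [MonoidAlgebra.coeff_single, Finsupp.sum_single_index]
  split_ifs
  exacts [Finsupp.single_zero _, rfl]

theorem twTr_single_mul_eq_single_map_mul [π.Normal] (hquot : ∀ g : G, φ g * g⁻¹ ∈ π)
    (g h : G) (r : R) :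
    twTr R π φ (MonoidAlgebra.single (g * h) r) = twTr R π φ (MonoidAlgebra.single (φ h * g) r) := by
  rw [twTr_single, twTr_single]
  by_cases hgh : g * h ∈ π
  · have hhg := (mul_mem_iff_map_mul_mem π φ hquot g h).1 hgh
    rw [dif_pos hgh, dif_pos hhg, Quot.sound (twRel_mul_map_mul π φ g h hgh hhg)]
  · rw [dif_neg hgh, dif_neg (mt (mul_mem_iff_map_mul_mem π φ hquot g h).2 hgh)]

end Twisted

theorem statement3_general (R G : Type) [CommRing R] [Group G] (π : Subgroup G) [π.Normal]
    (φ : G →* G) (hquot : ∀ g : G, φ g * g⁻¹ ∈ π) :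
    ∀ a b : MonoidAlgebra R G,
      twTr R π φ (a * b) = twTr R π φ (MonoidAlgebra.mapDomainRingHom R φ b * a) := by
  intro a b
  induction a using MonoidAlgebra.induction_linear with
  | zero => simp
  | add a a' ha ha' => simp only [add_mul, mul_add, twTr_add, ha, ha']
  | single g r =>
    induction b using MonoidAlgebra.induction_linear with
    | zero => simp
    | add b b' hb hb' => simp only [mul_add, map_add, add_mul, twTr_add, hb, hb']
    | single h s =>
      rw [MonoidAlgebra.mapDomainRingHom_apply, MonoidAlgebra.mapDomain_single,
        MonoidAlgebra.single_mul_single, MonoidAlgebra.single_mul_single, mul_comm r s]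
      exact twTr_single_mul_eq_single_map_mul π φ R hquot g h (s * r)

/-- `tr(a·b) = tr(φ(b)·a)` for the twisted trace, `φ` extended `R`-linearly to `R[G]`. -/
theorem statement3 (R G : Type) [CommRing R] [Group G] (π : Subgroup G) [π.Normal]
    (φ : G →* G) (hres : ∀ g ∈ π, φ g ∈ π) (hquot : ∀ g : G, φ g * g⁻¹ ∈ π) :
    ∀ a b : MonoidAlgebra R G,
      twTr R π φ (a * b) = twTr R π φ (MonoidAlgebra.mapDomainRingHom R φ b * a) :=
  statement3_general R G π φ hquot
end

section
/- Let π ◁ G with φ: G → G an endomorphism restricting to π and trivial on G/π. The inclusion R[π] → R[G] is equivariant for the twisted conjugation G-action β ↦ φ(γ)βγ⁻¹ (i.e., this action preserves π), and induces a split injection R[π_{φ'}] → R[G_φ] of R-modules, where G_φ = G/(β ∼ φ(γ)βγ⁻¹). -/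
open scoped Classical

/-- Twisted conjugacy relation on all of `G`: `a ∼ b` iff `b = φ(γ) a γ⁻¹`. -/
def twRelG {G : Type} [Group G] (φ : G →* G) (a b : G) : Prop :=
  ∃ γ : G, b = φ γ * a * γ⁻¹

/-- The set `G_φ` of `φ`-twisted conjugacy classes of `G`. -/
def TwClG (G : Type) [Group G] (φ : G →* G) := Quot (twRelG φ)

/-!
Since `φ` is trivial on `G/π`, the twisted conjugate `φ(γ) β γ⁻¹ = (φ(γ) γ⁻¹) (γ β γ⁻¹)` of
`β ∈ π` lies in `π`. Twisted conjugacy in `π` is by elements of all of `G`, so it is the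
restriction of twisted conjugacy in `G`, and `π_{φ'} → G_φ` is injective. A left inverse of the
induced map on free modules restricts a function on `G_φ` to the classes meeting `π`.
-/

theorem twisted_conj_mem {G : Type} [Group G] {π : Subgroup G} [π.Normal] {φ : G →* G}
    (hquot : ∀ g : G, φ g * g⁻¹ ∈ π) (γ : G) {a : G} (ha : a ∈ π) :
    φ γ * a * γ⁻¹ ∈ π := by
  have hsplit : φ γ * a * γ⁻¹ = (φ γ * γ⁻¹) * (γ * a * γ⁻¹) := by group
  rw [hsplit]
  exact mul_mem (hquot γ) (Subgroup.Normal.conj_mem ‹_› a ha γ)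

theorem twRelG_equivalence {G : Type} [Group G] (φ : G →* G) : Equivalence (twRelG φ) where
  refl a := ⟨1, by simp⟩
  symm := by
    rintro a b ⟨γ, rfl⟩
    exact ⟨γ⁻¹, by simp only [map_inv]; group⟩
  trans := by
    rintro a b c ⟨γ, rfl⟩ ⟨δ, rfl⟩
    exact ⟨δ * γ, by simp only [map_mul]; group⟩

def TwCl.toTwClG {G : Type} [Group G] (π : Subgroup G) (φ : G →* G) :
    TwCl π φ → TwClG G φ :=
  Quot.map Subtype.val fun _ _ h => h

theorem TwCl.toTwClG_injective {G : Type} [Group G] (π : Subgroup G) (φ : G →* G) :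
    Function.Injective (TwCl.toTwClG π φ) := by
  rintro ⟨x⟩ ⟨y⟩ h
  exact Quot.sound ((twRelG_equivalence φ).eqvGen_iff.mp (Quot.eq.mp h))

theorem statement16_general (R : Type) {G : Type} [CommRing R] [Group G]
    (π : Subgroup G) [π.Normal] (φ : G →* G)
    (hquot : ∀ g : G, φ g * g⁻¹ ∈ π) :
    (∀ γ a : G, a ∈ π → φ γ * a * γ⁻¹ ∈ π) ∧
    ∃ j : TwCl π φ → TwClG G φ,
      (∀ x : ↥π, j (Quot.mk (twRel π φ) x) = Quot.mk (twRelG φ) (x : G)) ∧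
      Function.Injective (Finsupp.lmapDomain R R j : (TwCl π φ →₀ R) → (TwClG G φ →₀ R)) ∧
      ∃ p : (TwClG G φ →₀ R) →ₗ[R] (TwCl π φ →₀ R),
        p.comp (Finsupp.lmapDomain R R j) = LinearMap.id := by
  have hj := TwCl.toTwClG_injective π φ
  refine ⟨fun γ _ ha => twisted_conj_mem hquot γ ha, TwCl.toTwClG π φ, fun _ => rfl,
    Finsupp.mapDomain_injective hj, Finsupp.lcomapDomain _ hj, ?_⟩
  exact LinearMap.ext (Finsupp.leftInverse_lcomapDomain_mapDomain (R := R) (M := R) _ hj)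

/-- The twisted conjugation action preserves `π`, and the inclusion `R[π] → R[G]`
induces a split injection `R[π_{φ'}] → R[G_φ]` of `R`-modules. -/
theorem statement16 (R : Type) {G : Type} [CommRing R] [Group G]
    (π : Subgroup G) [π.Normal] (φ : G →* G)
    (hres : ∀ g ∈ π, φ g ∈ π) (hquot : ∀ g : G, φ g * g⁻¹ ∈ π) :
    (∀ γ a : G, a ∈ π → φ γ * a * γ⁻¹ ∈ π) ∧
    ∃ j : TwCl π φ → TwClG G φ,
      (∀ x : ↥π, j (Quot.mk (twRel π φ) x) = Quot.mk (twRelG φ) (x : G)) ∧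
      Function.Injective (Finsupp.lmapDomain R R j : (TwCl π φ →₀ R) → (TwClG G φ →₀ R)) ∧
      ∃ p : (TwClG G φ →₀ R) →ₗ[R] (TwCl π φ →₀ R),
        p.comp (Finsupp.lmapDomain R R j) = LinearMap.id :=
  statement16_general R π φ hquot
end
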